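/- arXiv:1707.01203 — 3 statements merged into one kernel-verified Lean document; each statement's English description precedes it below -/
import Mathlib

section
/- There exists a universal constant M₁ > 0 such that for all 0 ≤ λ₁ ≤ λ₂, if X ~ Poisson(λ₁), then (λ₂ - λ₁) P(X ≥ λ₂) ≤ M₁ · min(λ₂, √λ₂). -/
open Real

lemma tsum_exp (x : ℝ) : ∑' n : ℕ, x ^ n / n.factorial = Real.exp x := by
  rw [Real.exp_eq_exp_ℝ, NormedSpace.exp_eq_tsum_div]

lemma summable0 (x : ℝ) : Summable (fun n : ℕ => x ^ n / n.factorial) :=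
  Real.summable_pow_div_factorial x

lemma summable1 (x : ℝ) : Summable (fun n : ℕ => (n : ℝ) * x ^ n / n.factorial) := by
  rw [← summable_nat_add_iff 1]
  have : (fun n : ℕ => ((n+1 : ℕ) : ℝ) * x ^ (n+1) / (n+1).factorial)
      = fun n : ℕ => x * (x ^ n / n.factorial) := by
    funext n
    push_cast [Nat.factorial_succ, pow_succ]
    field_simp
  rw [this]
  exact (summable0 x).mul_left x

lemma tsum1 (x : ℝ) : ∑' n : ℕ, (n : ℝ) * x ^ n / n.factorial = x * Real.exp x := by
  rw [Summable.tsum_eq_zero_add (summable1 x)]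
  simp only [Nat.cast_zero, zero_mul, zero_div, zero_add]
  have : (fun n : ℕ => ((n+1 : ℕ) : ℝ) * x ^ (n+1) / (n+1).factorial)
      = fun n : ℕ => x * (x ^ n / n.factorial) := by
    funext n
    push_cast [Nat.factorial_succ, pow_succ]
    field_simp
  rw [show (∑' n : ℕ, ((n+1 : ℕ) : ℝ) * x ^ (n+1) / (n+1).factorial)
      = ∑' n : ℕ, x * (x ^ n / n.factorial) from by rw [this]]
  rw [tsum_mul_left, tsum_exp]

lemma summable2 (x : ℝ) : Summable (fun n : ℕ => (n : ℝ) * ((n:ℝ) - 1) * x ^ n / n.factorial) := by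
  rw [← summable_nat_add_iff 1]
  have : (fun n : ℕ => ((n+1 : ℕ) : ℝ) * (((n+1:ℕ):ℝ) - 1) * x ^ (n+1) / (n+1).factorial)
      = fun n : ℕ => x * ((n:ℝ) * x ^ n / n.factorial) := by
    funext n
    push_cast [Nat.factorial_succ, pow_succ]
    field_simp
    ring
  rw [this]
  exact (summable1 x).mul_left x

lemma tsum2 (x : ℝ) : ∑' n : ℕ, (n : ℝ) * ((n:ℝ) - 1) * x ^ n / n.factorial = x^2 * Real.exp x := by
  rw [Summable.tsum_eq_zero_add (summable2 x)]
  simp only [Nat.cast_zero, zero_mul, zero_div, zero_add]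
  have : (fun n : ℕ => ((n+1 : ℕ) : ℝ) * (((n+1:ℕ):ℝ) - 1) * x ^ (n+1) / (n+1).factorial)
      = fun n : ℕ => x * ((n:ℝ) * x ^ n / n.factorial) := by
    funext n
    push_cast [Nat.factorial_succ, pow_succ]
    field_simp
    ring
  rw [show (∑' n : ℕ, ((n+1 : ℕ) : ℝ) * (((n+1:ℕ):ℝ) - 1) * x ^ (n+1) / (n+1).factorial)
      = ∑' n : ℕ, x * ((n:ℝ) * x ^ n / n.factorial) from by rw [this]]
  rw [tsum_mul_left, tsum1]
  ring

lemma summable_var (x : ℝ) : Summable (fun n : ℕ => ((n:ℝ) - x)^2 * (x ^ n / n.factorial)) := by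
  have : (fun n : ℕ => ((n:ℝ) - x)^2 * (x ^ n / n.factorial))
      = fun n : ℕ => ((n : ℝ) * ((n:ℝ) - 1) * x ^ n / n.factorial)
        + (1 - 2*x) * ((n : ℝ) * x ^ n / n.factorial)
        + x^2 * (x ^ n / n.factorial) := by
    funext n; ring
  rw [this]
  exact (((summable2 x).add ((summable1 x).mul_left _)).add ((summable0 x).mul_left _))

lemma tsum_var (x : ℝ) : ∑' n : ℕ, ((n:ℝ) - x)^2 * (x ^ n / n.factorial) = x * Real.exp x := by
  have h : (fun n : ℕ => ((n:ℝ) - x)^2 * (x ^ n / n.factorial))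
      = fun n : ℕ => ((n : ℝ) * ((n:ℝ) - 1) * x ^ n / n.factorial)
        + (1 - 2*x) * ((n : ℝ) * x ^ n / n.factorial)
        + x^2 * (x ^ n / n.factorial) := by
    funext n; ring
  rw [h, Summable.tsum_add ((summable2 x).add ((summable1 x).mul_left _)) ((summable0 x).mul_left _),
    Summable.tsum_add (summable2 x) ((summable1 x).mul_left _), tsum2, tsum_mul_left, tsum_mul_left,
    tsum1, tsum_exp]
  ring

/-- There is a universal constant `M₁ > 0` such that for all `0 ≤ λ₁ ≤ λ₂`, if
`X ~ Poisson(λ₁)`, then `(λ₂ - λ₁) P(X ≥ λ₂) ≤ M₁ · min(λ₂, √λ₂)`. -/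
theorem stmt_4 :
    ∃ M₁ : ℝ, 0 < M₁ ∧ ∀ lam₁ lam₂ : ℝ, 0 ≤ lam₁ → lam₁ ≤ lam₂ →
      (lam₂ - lam₁) *
          (∑' k : ℕ, if lam₂ ≤ (k : ℝ) then
            Real.exp (-lam₁) * lam₁ ^ k / (k.factorial : ℝ) else 0)
        ≤ M₁ * min lam₂ (Real.sqrt lam₂) := by
  refine ⟨1, one_pos, fun l1 l2 h1 h12 => ?_⟩
  rw [one_mul]
  set d := l2 - l1 with hd
  have hd0 : 0 ≤ d := sub_nonneg.2 h12
  have hl2 : 0 ≤ l2 := h1.trans h12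
  set p : ℕ → ℝ := fun k => Real.exp (-l1) * l1 ^ k / k.factorial with hp
  have hpnn : ∀ k, 0 ≤ p k := fun k => by
    apply div_nonneg (mul_nonneg (Real.exp_nonneg _) (pow_nonneg h1 _)) (Nat.cast_nonneg _)
  have hpeq : ∀ k, p k = Real.exp (-l1) * (l1 ^ k / k.factorial) := fun k => by
    rw [hp]; ring
  have hsump : Summable p := by
    rw [show p = fun k => Real.exp (-l1) * (l1 ^ k / k.factorial) from funext hpeq]
    exact (summable0 l1).mul_left _
  have htsump : ∑' k, p k = 1 := by
    rw [show p = fun k => Real.exp (-l1) * (l1 ^ k / k.factorial) from funext hpeq]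
    rw [tsum_mul_left, tsum_exp, ← Real.exp_add]
    simp
  set S : ℝ := ∑' k : ℕ, if l2 ≤ (k : ℝ) then p k else 0 with hS
  have hsumS : Summable (fun k : ℕ => if l2 ≤ (k : ℝ) then p k else 0) := by
    apply Summable.of_nonneg_of_le (fun k => by positivity) (fun k => ?_) hsump
    split
    · exact le_refl _
    · exact hpnn k
  have hS0 : 0 ≤ S := tsum_nonneg fun k => by positivity
  have hS1 : S ≤ 1 := by
    rw [hS, ← htsump]
    refine Summable.tsum_le_tsum (fun k => ?_) hsumS hsump
    split
    · exact le_refl _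
    · exact hpnn k
  -- Chebyshev: d^2 * S ≤ l1
  have hvarp : Summable (fun k : ℕ => ((k:ℝ) - l1)^2 * p k) := by
    have : (fun k : ℕ => ((k:ℝ) - l1)^2 * p k)
        = fun k : ℕ => Real.exp (-l1) * (((k:ℝ) - l1)^2 * (l1 ^ k / k.factorial)) := by
      funext k; rw [hpeq]; ring
    rw [this]
    exact (summable_var l1).mul_left _
  have hvar : ∑' k : ℕ, ((k:ℝ) - l1)^2 * p k = l1 := by
    have : (fun k : ℕ => ((k:ℝ) - l1)^2 * p k)
        = fun k : ℕ => Real.exp (-l1) * (((k:ℝ) - l1)^2 * (l1 ^ k / k.factorial)) := by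
      funext k; rw [hpeq]; ring
    rw [this, tsum_mul_left, tsum_var, ← mul_assoc, mul_comm (Real.exp (-l1)) l1, mul_assoc,
      ← Real.exp_add]
    simp
  have hcheb : d^2 * S ≤ l1 := by
    rw [hS, ← tsum_mul_left, ← hvar]
    refine Summable.tsum_le_tsum (fun k => ?_) (hsumS.mul_left _) hvarp
    split
    · rename_i hk
      have h2 : d^2 ≤ ((k:ℝ) - l1)^2 := by
        apply pow_le_pow_left₀ hd0
        rw [hd]; linarith
      nlinarith [hpnn k]
    · rw [mul_zero]
      positivity
  -- Now conclude
  rw [le_min_iff]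
  constructor
  · calc d * S ≤ d * 1 := mul_le_mul_of_nonneg_left hS1 hd0
    _ = d := mul_one d
    _ ≤ l2 := by linarith
  · -- d * S ≤ sqrt l2; suffices d * S ≤ sqrt l1
    have key : d * S ≤ Real.sqrt l1 := by
      rcases le_or_gt d (Real.sqrt l1) with h | h
      · calc d * S ≤ d * 1 := mul_le_mul_of_nonneg_left hS1 hd0
        _ = d := mul_one d
        _ ≤ _ := h
      · have hdpos : 0 < d := lt_of_le_of_lt (Real.sqrt_nonneg _) h
        have : d * (d * S) ≤ d * Real.sqrt l1 := by
          rw [← mul_assoc, ← sq]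
          calc d^2 * S ≤ l1 := hcheb
          _ = Real.sqrt l1 * Real.sqrt l1 := (Real.mul_self_sqrt h1).symm
          _ ≤ d * Real.sqrt l1 :=
            mul_le_mul_of_nonneg_right h.le (Real.sqrt_nonneg _)
        exact le_of_mul_le_mul_left this hdpos
    exact key.trans (Real.sqrt_le_sqrt h12)
end

section
/- There exists a universal constant M₂ > 0 such that for all λ₁ ≥ λ₂ ≥ 1, if X ~ Poisson(λ₁), then (λ₁ - λ₂) P(X ≤ λ₂) ≤ M₂ √λ₂. -/
/-!
Write `p_k(t) = e^{-t} t^k / k!` and `n = ⌊λ₂⌋`. Since `t p_k(t) = (k + 1) p_{k+1}(t)` and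
`k + 1 ≤ λ₂` for `k < n`, an induction on `n` gives `(λ₁ - λ₂) P(X ≤ λ₂) ≤ λ₁ p_n(λ₁)
= (n + 1) p_{n+1}(λ₁)`. As a function of the rate, `p_m` peaks at `t = m`, and Stirling's lower
bound for `m!` gives `p_m(m) ≤ 1 / √(2πm)`; hence the right-hand side is at most
`√((n + 1) / 2π) ≤ √λ₂`.
-/

open Real Finset Nat

noncomputable def poissonMass (t : ℝ) (k : ℕ) : ℝ := exp (-t) * t ^ k / k !

lemma poissonMass_nonneg {t : ℝ} (ht : 0 ≤ t) (k : ℕ) : 0 ≤ poissonMass t k := by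
  unfold poissonMass; positivity

lemma mul_poissonMass (t : ℝ) (k : ℕ) :
    t * poissonMass t k = (k + 1) * poissonMass t (k + 1) := by
  unfold poissonMass
  rw [factorial_succ]
  push_cast
  field_simp
  ring

lemma sub_mul_sum_poissonMass_le {t b : ℝ} (ht : 0 ≤ t) {n : ℕ} (hn : (n : ℝ) ≤ b) :
    (t - b) * ∑ k ∈ range (n + 1), poissonMass t k ≤ t * poissonMass t n := by
  induction n with
  | zero =>
    have hp := poissonMass_nonneg ht 0
    simp only [zero_add, sum_range_one]
    nlinarith
  | succ n ih =>
    push_cast at hn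
    have hp := poissonMass_nonneg ht (n + 1)
    calc (t - b) * ∑ k ∈ range (n + 1 + 1), poissonMass t k
        = (t - b) * ∑ k ∈ range (n + 1), poissonMass t k + (t - b) * poissonMass t (n + 1) := by
          rw [sum_range_succ, mul_add]
      _ ≤ t * poissonMass t n + (t - b) * poissonMass t (n + 1) := by
          linarith [ih (by linarith)]
      _ = t * poissonMass t (n + 1) + (n + 1 - b) * poissonMass t (n + 1) := by
          rw [mul_poissonMass]; ring
      _ ≤ t * poissonMass t (n + 1) := by nlinarith

lemma poissonMass_le_poissonMass_self {t : ℝ} (ht : 0 ≤ t) (m : ℕ) :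
    poissonMass t m ≤ poissonMass m m := by
  rcases Nat.eq_zero_or_pos m with rfl | hm
  · simp [poissonMass, ht]
  have hm' : (0 : ℝ) < m := by exact_mod_cast hm
  have hratio : t / m ≤ exp (t / m - 1) := by linarith [add_one_le_exp (t / m - 1)]
  have hpow : t ^ m ≤ (m : ℝ) ^ m * exp (t - m) := by
    calc t ^ m = (m : ℝ) ^ m * (t / m) ^ m := by rw [div_pow, mul_div_cancel₀ _ (by positivity)]
      _ ≤ (m : ℝ) ^ m * exp (t / m - 1) ^ m := by gcongr
      _ = (m : ℝ) ^ m * exp (t - m) := by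
          rw [← exp_nat_mul]; congr 2; field_simp
  unfold poissonMass
  gcongr ?_ / _
  calc exp (-t) * t ^ m ≤ exp (-t) * ((m : ℝ) ^ m * exp (t - m)) := by gcongr
    _ = exp (-m) * (m : ℝ) ^ m := by rw [mul_left_comm, ← exp_add]; ring_nf

lemma sqrt_mul_poissonMass_self_le_one (m : ℕ) : √(2 * π * m) * poissonMass m m ≤ 1 := by
  have hstirling := Stirling.le_factorial_stirling m
  have hfac : (0 : ℝ) < m ! := by exact_mod_cast factorial_pos m
  rw [div_pow, ← exp_nat_mul, mul_one] at hstirling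
  unfold poissonMass
  rw [← mul_div_assoc, div_le_one hfac]
  calc √(2 * π * m) * (exp (-m) * (m : ℝ) ^ m) = √(2 * π * m) * ((m : ℝ) ^ m / exp m) := by
        rw [exp_neg]; ring
    _ ≤ m ! := hstirling

lemma mul_poissonMass_le {t : ℝ} (ht : 0 ≤ t) (n : ℕ) :
    t * poissonMass t n ≤ √((n + 1) / (2 * π)) := by
  have hmode := sqrt_mul_poissonMass_self_le_one (n + 1)
  push_cast at hmode
  have hm : (0 : ℝ) < n + 1 := by positivity
  calc t * poissonMass t n = (n + 1) * poissonMass t (n + 1) := mul_poissonMass t n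
    _ ≤ (n + 1) * poissonMass (n + 1) (n + 1) := by
        gcongr; exact_mod_cast poissonMass_le_poissonMass_self ht (n + 1)
    _ = √((n + 1) / (2 * π)) * (√(2 * π * (n + 1)) * poissonMass (n + 1) (n + 1)) := by
        rw [← mul_assoc, ← sqrt_mul (by positivity),
          show (n + 1) / (2 * π) * (2 * π * (n + 1)) = ((n : ℝ) + 1) ^ 2 by field_simp,
          sqrt_sq hm.le]
    _ ≤ √((n + 1) / (2 * π)) := mul_le_of_le_one_right (sqrt_nonneg _) hmode

lemma tsum_ite_le_eq_sum_range_floor {M : Type*} [AddCommMonoid M] [TopologicalSpace M]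
    (f : ℕ → M) {b : ℝ} (hb : 0 ≤ b) :
    (∑' k : ℕ, if (k : ℝ) ≤ b then f k else 0) = ∑ k ∈ range (⌊b⌋₊ + 1), f k := by
  rw [tsum_eq_sum (s := range (⌊b⌋₊ + 1))]
  · refine sum_congr rfl fun k hk => if_pos ?_
    exact (le_floor_iff hb).mp (by simpa [Nat.lt_succ_iff] using hk)
  · intro k hk
    refine if_neg fun hkb => hk ?_
    simpa [Nat.lt_succ_iff] using (le_floor_iff hb).mpr hkb

/-- There is a universal constant `M₂ > 0` such that for all `λ₁ ≥ λ₂ ≥ 1`, if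
`X ~ Poisson(λ₁)`, then `(λ₁ - λ₂) P(X ≤ λ₂) ≤ M₂ √λ₂`. -/
theorem stmt_5 :
    ∃ M₂ : ℝ, 0 < M₂ ∧ ∀ lam₁ lam₂ : ℝ, 1 ≤ lam₂ → lam₂ ≤ lam₁ →
      (lam₁ - lam₂) *
          (∑' k : ℕ, if (k : ℝ) ≤ lam₂ then
            Real.exp (-lam₁) * lam₁ ^ k / (k.factorial : ℝ) else 0)
        ≤ M₂ * Real.sqrt lam₂ := by
  refine ⟨1, one_pos, fun lam₁ lam₂ h1 h2 => ?_⟩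
  have hlam₁ : 0 ≤ lam₁ := by linarith
  have hn : (⌊lam₂⌋₊ : ℝ) ≤ lam₂ := floor_le (by linarith)
  have hn' : (⌊lam₂⌋₊ : ℝ) + 1 ≤ 2 * lam₂ := by linarith [lt_floor_add_one lam₂]
  change (lam₁ - lam₂) * (∑' k : ℕ, if (k : ℝ) ≤ lam₂ then poissonMass lam₁ k else 0) ≤ _
  rw [tsum_ite_le_eq_sum_range_floor _ (by linarith)]
  calc _ ≤ lam₁ * poissonMass lam₁ ⌊lam₂⌋₊ := sub_mul_sum_poissonMass_le hlam₁ hn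
    _ ≤ √((⌊lam₂⌋₊ + 1) / (2 * π)) := mul_poissonMass_le hlam₁ _
    _ ≤ 1 * √lam₂ := by
        rw [one_mul]
        gcongr
        rw [div_le_iff₀ (by positivity)]
        nlinarith [pi_gt_three]
end

section
/- For all real t ≥ 0 and x ≥ 0, the total variation distance between Poisson distributions satisfies TV(Poisson(t), Poisson(t+x)) ≤ min(1 − e^{-x}, √(2/e)·(√(t+x) − √t)). -/
/-!
Write `p_s(k) = e^{-s} s^k / k!`.

Since `e^{-x} p_t ≤ p_{t+x}` pointwise, `Poisson(t+x)` is the mixture of `e^{-x} Poisson(t)` and a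
measure of mass `1 - e^{-x}`, which gives the first bound.

For the second, `d/ds p_s(k) = p_s(k-1) - p_s(k)`, and `k ↦ p_s(k-1)` increases up to `⌊s⌋ + 1`
and decreases afterwards, so `∑_k |d/ds p_s(k)| ≤ 2 max_k p_s(k)`. Maximising `e^{-2s} (2s)^{2k+1}`
over `s` reduces `p_s(k) ≤ 1/√(2es)` to `(2k+1)^{2k+1} ≤ (2e)^{2k} (k!)²`, which is a finite check
for `k ≤ 3` and follows from Stirling's lower bound `k! ≥ √(2πk) (k/e)^k` for `k ≥ 4`. Integrating
`√(2/e) s^{-1/2}` over `[t, t+x]` gives `∑_k |p_t(k) - p_{t+x}(k)| ≤ 2√(2/e) (√(t+x) - √t)`.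
-/

open Real Finset
open scoped Nat

theorem tsum_abs_sub_le_of_mul_le {ι : Type*} {p q : ι → ℝ} {c : ℝ} (hp : HasSum p 1)
    (hq : HasSum q 1) (hp0 : ∀ i, 0 ≤ p i) (hc : c ≤ 1) (hpq : ∀ i, c * p i ≤ q i) :
    ∑' i, |p i - q i| ≤ 2 * (1 - c) := by
  have hbound : ∀ i, |p i - q i| ≤ p i + q i - 2 * c * p i := fun i =>
    abs_sub_le_iff.2 ⟨by linarith [hpq i], by nlinarith [mul_nonneg (sub_nonneg.2 hc) (hp0 i)]⟩
  have hsum := (hp.add hq).sub (hp.mul_left (2 * c))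
  calc ∑' i, |p i - q i| ≤ ∑' i, (p i + q i - 2 * c * p i) :=
        (hp.summable.sub hq.summable).abs.tsum_le_tsum hbound hsum.summable
    _ = 2 * (1 - c) := by rw [hsum.tsum_eq]; ring

theorem sum_range_abs_sub_of_unimodal (g : ℕ → ℝ) (M : ℕ) (hup : ∀ k < M, g k ≤ g (k + 1))
    (hdown : ∀ k, M ≤ k → g (k + 1) ≤ g k) (n : ℕ) :
    ∑ k ∈ range n, |g (k + 1) - g k| = 2 * g (min n M) - g 0 - g n := by
  induction n with
  | zero => simp only [sum_range_zero, Nat.zero_min]; ring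
  | succ n ih =>
    rw [sum_range_succ, ih]
    rcases lt_or_ge n M with h | h
    · rw [min_eq_left h.le, min_eq_left h, abs_of_nonneg (sub_nonneg.2 (hup n h))]
      ring
    · rw [min_eq_right h, min_eq_right (by omega), abs_of_nonpos (sub_nonpos.2 (hdown n h))]
      ring

theorem pow_mul_exp_neg_le {y : ℝ} (hy : 0 ≤ y) (b : ℕ) :
    y ^ b * exp (-y) ≤ b ^ b * exp (-b) := by
  rcases b.eq_zero_or_pos with rfl | hb
  · simpa using hy
  have hb' : (0 : ℝ) < b := by exact_mod_cast hb
  have h : (y / b) ^ b ≤ exp (y - b) := by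
    calc (y / b) ^ b ≤ exp (y / b - 1) ^ b := by
          gcongr
          linarith [add_one_le_exp (y / b - 1)]
      _ = exp (y - b) := by rw [← exp_nat_mul]; field_simp
  rw [div_pow, div_le_iff₀ (by positivity), sub_eq_add_neg, exp_add] at h
  calc y ^ b * exp (-y) ≤ exp y * exp (-b) * b ^ b * exp (-y) := by gcongr
    _ = b ^ b * exp (-b) * (exp y * exp (-y)) := by ring
    _ = b ^ b * exp (-b) := by rw [← exp_add, add_neg_cancel, exp_zero, mul_one]

theorem add_one_div_pow_le_pi {n : ℕ} (hn : 8 ≤ n) : ((n + 1 : ℝ) / n) ^ (n + 1) ≤ π := by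
  have hn' : (8 : ℝ) ≤ n := by exact_mod_cast hn
  have hexp : exp (1 / 8) ≤ 8 / 7 := by
    have := exp_bound_div_one_sub_of_interval' (x := 1 / 8) (by norm_num) (by norm_num)
    norm_num at this ⊢; linarith
  calc ((n + 1 : ℝ) / n) ^ (n + 1) ≤ exp (1 / n) ^ (n + 1) := by
        gcongr
        rw [add_div, div_self (by positivity)]
        linarith [add_one_le_exp (1 / n : ℝ)]
    _ = exp 1 * exp (1 / n) := by
        rw [← exp_nat_mul, ← exp_add]; congr 1; push_cast; field_simp
    _ ≤ exp 1 * exp (1 / 8) := by gcongr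
    _ ≤ 2.7182818286 * (8 / 7) := by gcongr; exact exp_one_lt_d9.le
    _ ≤ π := by linarith [pi_gt_d2]

theorem two_mul_add_one_pow_le (k : ℕ) :
    (2 * k + 1 : ℝ) ^ (2 * k + 1) ≤ (2 * exp 1) ^ (2 * k) * (k ! : ℝ) ^ 2 := by
  rcases le_or_gt k 3 with hk | hk
  · calc (2 * k + 1 : ℝ) ^ (2 * k + 1) ≤ (2 * 2.7) ^ (2 * k) * (k ! : ℝ) ^ 2 := by
          interval_cases k <;> norm_num [Nat.factorial]
      _ ≤ (2 * exp 1) ^ (2 * k) * (k ! : ℝ) ^ 2 := by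
          gcongr; linarith [exp_one_gt_d9]
  have hk' : (0 : ℝ) < k := by exact_mod_cast (show 0 < k by omega)
  have hstirling := pow_le_pow_left₀ (by positivity) (Stirling.le_factorial_stirling k) 2
  rw [mul_pow, sq_sqrt (by positivity), div_pow] at hstirling
  have hpi := add_one_div_pow_le_pi (n := 2 * k) (by omega)
  push_cast at hpi
  rw [div_pow, div_le_iff₀ (by positivity)] at hpi
  calc (2 * k + 1 : ℝ) ^ (2 * k + 1) ≤ π * (2 * k) ^ (2 * k + 1) := hpi
    _ = (2 * exp 1) ^ (2 * k) * (2 * π * k * (k ^ k / exp 1 ^ k) ^ 2) := by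
        field_simp; ring
    _ ≤ (2 * exp 1) ^ (2 * k) * (k ! : ℝ) ^ 2 := by gcongr

noncomputable def poissonWeight (s : ℝ) (k : ℕ) : ℝ := exp (-s) * s ^ k / k !

-- `poissonWeight s (k - 1)`, taken to be `0` at `k = 0`.
noncomputable def poissonWeightPred (s : ℝ) : ℕ → ℝ
  | 0 => 0
  | k + 1 => poissonWeight s k

section PoissonWeight

variable {s : ℝ}

theorem poissonWeight_nonneg (hs : 0 ≤ s) (k : ℕ) : 0 ≤ poissonWeight s k := by
  unfold poissonWeight; positivity

theorem hasSum_poissonWeight (hs : 0 ≤ s) : HasSum (poissonWeight s) 1 :=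
  ProbabilityTheory.hasSum_one_poissonMeasure ⟨s, hs⟩

theorem poissonWeight_succ (s : ℝ) (k : ℕ) :
    poissonWeight s (k + 1) = s / (k + 1) * poissonWeight s k := by
  unfold poissonWeight
  rw [Nat.factorial_succ]
  push_cast
  field_simp
  ring

theorem poissonWeight_le_succ (hs : 0 ≤ s) {k : ℕ} (hk : (k : ℝ) + 1 ≤ s) :
    poissonWeight s k ≤ poissonWeight s (k + 1) := by
  rw [poissonWeight_succ]
  exact le_mul_of_one_le_left (poissonWeight_nonneg hs k) ((one_le_div (by positivity)).2 hk)

theorem poissonWeight_succ_le (hs : 0 ≤ s) {k : ℕ} (hk : s ≤ k + 1) :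
    poissonWeight s (k + 1) ≤ poissonWeight s k := by
  rw [poissonWeight_succ]
  exact mul_le_of_le_one_left (poissonWeight_nonneg hs k) ((div_le_one (by positivity)).2 hk)

theorem exp_neg_mul_poissonWeight_le {t x : ℝ} (ht : 0 ≤ t) (hx : 0 ≤ x) (k : ℕ) :
    exp (-x) * poissonWeight t k ≤ poissonWeight (t + x) k := by
  unfold poissonWeight
  rw [neg_add, exp_add, ← mul_div_assoc, mul_left_comm, mul_assoc]
  gcongr
  linarith

theorem hasDerivAt_poissonWeight (s : ℝ) (k : ℕ) :
    HasDerivAt (poissonWeight · k) (poissonWeightPred s k - poissonWeight s k) s := by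
  have h : HasDerivAt (fun u => exp (-u) * u ^ k / k !)
      ((exp (-s) * -1 * s ^ k + exp (-s) * (k * s ^ (k - 1))) / k !) s :=
    (((hasDerivAt_neg s).exp).mul (hasDerivAt_pow k s)).div_const _
  refine h.congr_deriv ?_
  cases k with
  | zero => simp [poissonWeightPred, poissonWeight]
  | succ k =>
    simp only [poissonWeightPred, poissonWeight, Nat.factorial_succ, Nat.add_sub_cancel]
    push_cast
    field_simp
    ring

theorem continuous_poissonWeight (k : ℕ) : Continuous (poissonWeight · k) := by
  unfold poissonWeight; fun_prop

theorem continuous_poissonWeightPred (k : ℕ) : Continuous (poissonWeightPred · k) := by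
  cases k with
  | zero => exact continuous_const
  | succ k => exact continuous_poissonWeight k

theorem poissonWeight_le_inv_sqrt (hs : 0 < s) (k : ℕ) :
    poissonWeight s k ≤ 1 / √(2 * exp 1 * s) := by
  have hb : (2 * k + 1 : ℝ) = ((2 * k + 1 : ℕ) : ℝ) := by push_cast; ring
  have hmax := pow_mul_exp_neg_le (y := 2 * s) (by positivity) (2 * k + 1)
  rw [← hb] at hmax
  have h4 : (4 : ℝ) ^ k = 2 ^ (2 * k) := by rw [pow_mul]; norm_num
  have hsq : 2 * exp 1 * s * poissonWeight s k ^ 2 ≤ 1 := by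
    calc 2 * exp 1 * s * poissonWeight s k ^ 2
        = exp 1 * ((2 * s) ^ (2 * k + 1) * exp (-(2 * s))) / (4 ^ k * (k ! : ℝ) ^ 2) := by
          unfold poissonWeight
          rw [show -(2 * s) = -s + -s by ring, exp_add, h4]
          field_simp
          ring
      _ ≤ exp 1 * ((2 * k + 1) ^ (2 * k + 1) * exp (-(2 * k + 1))) / (4 ^ k * (k ! : ℝ) ^ 2) := by
          gcongr
      _ = (2 * k + 1) ^ (2 * k + 1) / ((2 * exp 1) ^ (2 * k) * (k ! : ℝ) ^ 2) := by
          have he : exp (-(2 * k + 1 : ℝ)) = ((exp 1)⁻¹) ^ (2 * k + 1) := by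
            rw [← exp_neg, ← exp_nat_mul]; push_cast; ring_nf
          rw [he, h4, inv_pow]
          field_simp
          ring
      _ ≤ 1 := div_le_one_of_le₀ (two_mul_add_one_pow_le k) (by positivity)
  rw [le_div_iff₀ (by positivity), ← sqrt_sq (poissonWeight_nonneg hs.le k),
    ← sqrt_mul (sq_nonneg _)]
  exact sqrt_le_one.2 (by linarith)

theorem sum_range_abs_poissonWeightPred_sub_le (hs : 0 < s) (n : ℕ) :
    ∑ k ∈ range n, |poissonWeightPred s k - poissonWeight s k|
      ≤ √(2 / exp 1) * s ^ (-(1 / 2) : ℝ) := by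
  set g := poissonWeightPred s
  have hup : ∀ k < ⌊s⌋₊ + 1, g k ≤ g (k + 1)
    | 0, _ => poissonWeight_nonneg hs.le 0
    | j + 1, hj =>
      poissonWeight_le_succ hs.le (by exact_mod_cast (Nat.le_floor_iff hs.le).1 (by omega))
  have hdown : ∀ k, ⌊s⌋₊ + 1 ≤ k → g (k + 1) ≤ g k
    | 0, hk => by omega
    | j + 1, hj => poissonWeight_succ_le hs.le
        ((Nat.lt_floor_add_one s).le.trans (by exact_mod_cast hj))
  have hnonneg : ∀ k, 0 ≤ g k
    | 0 => le_rfl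
    | k + 1 => poissonWeight_nonneg hs.le k
  have hbound : ∀ k, g k ≤ 1 / √(2 * exp 1 * s)
    | 0 => by positivity
    | k + 1 => poissonWeight_le_inv_sqrt hs k
  have hconst : 2 * (1 / √(2 * exp 1 * s)) = √(2 / exp 1) * s ^ (-(1 / 2) : ℝ) := by
    rw [rpow_neg hs.le, ← sqrt_eq_rpow, sqrt_mul (by positivity), sqrt_div zero_le_two,
      sqrt_mul zero_le_two]
    have h2 : √2 ^ 2 = 2 := sq_sqrt zero_le_two
    field_simp
    rw [h2]
  calc ∑ k ∈ range n, |g k - poissonWeight s k| = ∑ k ∈ range n, |g (k + 1) - g k| :=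
        sum_congr rfl fun k _ => abs_sub_comm _ _
    _ = 2 * g (min n (⌊s⌋₊ + 1)) - g 0 - g n := sum_range_abs_sub_of_unimodal g _ hup hdown n
    _ ≤ 2 * (1 / √(2 * exp 1 * s)) := by
        have hg0 : g 0 = 0 := rfl
        linarith [hbound (min n (⌊s⌋₊ + 1)), hnonneg n]
    _ = √(2 / exp 1) * s ^ (-(1 / 2) : ℝ) := hconst

end PoissonWeight

theorem sum_range_abs_poissonWeight_sub_le {t u : ℝ} (ht : 0 ≤ t) (htu : t ≤ u) (n : ℕ) :
    ∑ k ∈ range n, |poissonWeight t k - poissonWeight u k| ≤ 2 * √(2 / exp 1) * (√u - √t) := by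
  have hcont : ∀ k, Continuous fun s => poissonWeightPred s k - poissonWeight s k := fun k =>
    (continuous_poissonWeightPred k).sub (continuous_poissonWeight k)
  have hftc : ∀ k, ∫ s in t..u, (poissonWeightPred s k - poissonWeight s k)
      = poissonWeight u k - poissonWeight t k := fun k =>
    intervalIntegral.integral_eq_sub_of_hasDerivAt (fun s _ => hasDerivAt_poissonWeight s k)
      ((hcont k).intervalIntegrable _ _)
  calc ∑ k ∈ range n, |poissonWeight t k - poissonWeight u k|
      ≤ ∑ k ∈ range n, ∫ s in t..u, |poissonWeightPred s k - poissonWeight s k| :=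
        sum_le_sum fun k _ => by
          rw [abs_sub_comm, ← hftc]
          exact intervalIntegral.abs_integral_le_integral_abs htu
    _ = ∫ s in t..u, ∑ k ∈ range n, |poissonWeightPred s k - poissonWeight s k| :=
        (intervalIntegral.integral_finsetSum fun k _ =>
          (hcont k).abs.intervalIntegrable _ _).symm
    _ ≤ ∫ s in t..u, √(2 / exp 1) * s ^ (-(1 / 2) : ℝ) :=
        intervalIntegral.integral_mono_on_of_le_Ioo htu
          ((continuous_finsetSum _ fun k _ => (hcont k).abs).intervalIntegrable _ _)
          ((intervalIntegral.intervalIntegrable_rpow' (by norm_num)).const_mul _)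
          fun s hs => sum_range_abs_poissonWeightPred_sub_le (ht.trans_lt hs.1) n
    _ = 2 * √(2 / exp 1) * (√u - √t) := by
        rw [intervalIntegral.integral_const_mul, integral_rpow (Or.inl (by norm_num)),
          sqrt_eq_rpow u, sqrt_eq_rpow t]
        norm_num
        ring

/-- Adell–Lekuona bound: for `t ≥ 0`, `x ≥ 0`,
`TV(Poisson(t), Poisson(t+x)) ≤ min(1 − e^{-x}, √(2/e)(√(t+x) − √t))`. -/
theorem stmt_17 (t x : ℝ) (ht : 0 ≤ t) (hx : 0 ≤ x) :
    (1 / 2) * ∑' k : ℕ,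
        |Real.exp (-t) * t ^ k / (k.factorial : ℝ)
          - Real.exp (-(t + x)) * (t + x) ^ k / (k.factorial : ℝ)|
      ≤ min (1 - Real.exp (-x))
          (Real.sqrt (2 / Real.exp 1) * (Real.sqrt (t + x) - Real.sqrt t)) := by
  change (1 / 2) * ∑' k, |poissonWeight t k - poissonWeight (t + x) k| ≤ _
  have htx : 0 ≤ t + x := add_nonneg ht hx
  refine le_min ?_ ?_
  · have := tsum_abs_sub_le_of_mul_le (hasSum_poissonWeight ht) (hasSum_poissonWeight htx)
      (poissonWeight_nonneg ht) (exp_le_one_iff.2 (neg_nonpos.2 hx))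
      (exp_neg_mul_poissonWeight_le ht hx)
    linarith
  · have := Real.tsum_le_of_sum_range_le (fun _ => abs_nonneg _)
      (sum_range_abs_poissonWeight_sub_le ht (le_add_of_nonneg_right hx))
    linarith
end
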